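/- Let n ≥ 2 and let B be a set of regular languages over Σ_n. If there exists ℓ ∈ ℕ such that every L ∈ B is contained in a finite union of members of R_{≤ℓ}, then B is not a D_n-basic-separator set. -/

import Mathlib

set_option linter.unusedVariables false

/-! ### Alphabet, effects, Dyck languages -/

abbrev Sig (n : ℕ) := Fin n × Bool

def letterEff {n : ℕ} (a : Sig n) : Fin n → ℤ :=
  fun j => if j = a.1 then (if a.2 then 1 else -1) else 0

def wordEff {n : ℕ} (w : List (Sig n)) : Fin n → ℤ :=
  (w.map letterEff).sum

/-- The Dyck language `D_n`. -/
def Dyck (n : ℕ) : Language (Sig n) :=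
  {w | wordEff w = 0 ∧ ∀ u, u <+: w → ∀ j, 0 ≤ wordEff u j}

/-- The coverability Dyck language `D_n^↑`. -/
def CovDyck (n : ℕ) : Language (Sig n) :=
  {w | ∀ u, u <+: w → ∀ j, 0 ≤ wordEff u j}

/-- The `ℤ`-Dyck language `D_n^ℤ`. -/
def ZDyck (n : ℕ) : Language (Sig n) :=
  {w | wordEff w = 0}

/-! ### VASS -/

structure VASS (A : Type) where
  Q : Type
  C : Type
  finQ : Finite Q
  finC : Finite C
  E : Set (Q × Option A × (C → ℤ) × Q)
  finE : E.Finite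

inductive VASS.NRun {A : Type} (V : VASS A) :
    (V.Q × (V.C → ℕ)) → List A → (V.Q × (V.C → ℕ)) → Prop
  | refl (cfg : V.Q × (V.C → ℕ)) : VASS.NRun V cfg [] cfg
  | step {q : V.Q} {c : V.C → ℕ} {a : Option A} {d : V.C → ℤ} {q' : V.Q}
      {c' : V.C → ℕ} {w : List A} {last : V.Q × (V.C → ℕ)} :
      (q, a, d, q') ∈ V.E →
      (∀ j, (c' j : ℤ) = (c j : ℤ) + d j) →
      VASS.NRun V (q', c') w last →
      VASS.NRun V (q, c) (a.toList ++ w) last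

/-- An initialized VASS: generalized initial/final configurations,
with `none` playing the role of `ω`. -/
structure InitVASS (A : Type) extends VASS A where
  qin : Q
  qout : Q
  cin : C → Option ℕ
  cout : C → Option ℕ

/-- The reachability language of an initialized VASS. -/
def InitVASS.lang {A : Type} (V : InitVASS A) : Language A :=
  {w | ∃ c0 cl : V.C → ℕ,
      V.toVASS.NRun (V.qin, c0) w (V.qout, cl) ∧
      (∀ j m, V.cin j = some m → c0 j = m) ∧
      (∀ j m, V.cout j = some m → cl j = m)}

/-! ### Transducers -/

structure Transducer (G A : Type) where
  Q : Type
  finQ : Finite Q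
  start : Q
  accept : Set Q
  trans : Set (Q × (Option G × Option A) × Q)
  finT : trans.Finite

inductive Transducer.Path {G A : Type} (T : Transducer G A) :
    T.Q → List G → List A → T.Q → Prop
  | refl (q : T.Q) : Transducer.Path T q [] [] q
  | step {q q' qf : T.Q} {g : Option G} {a : Option A} {u : List G} {v : List A} :
      (q, (g, a), q') ∈ T.trans →
      Transducer.Path T q' u v qf →
      Transducer.Path T q (g.toList ++ u) (a.toList ++ v) qf

/-- The relation recognized by a transducer. -/
def Transducer.rel {G A : Type} (T : Transducer G A) (u : List G) (v : List A) : Prop :=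
  ∃ qf ∈ T.accept, T.Path T.start u v qf

/-- `T⁻¹(L)`. -/
def Transducer.invImage {G A : Type} (T : Transducer G A) (L : Language A) : Language G :=
  {u | ∃ v ∈ L, T.rel u v}

/-! ### Regular separability -/

def RegSep {A : Type} (L1 L2 : Language A) : Prop :=
  ∃ R : Language A, R.IsRegular ∧ L1 ≤ R ∧ ∀ w ∈ R, w ∉ L2

/-! ### Linear sets and regular approximations -/

structure LinSet (n : ℕ) where
  base : Fin n → ℤ
  periods : Set (Fin n → ℤ)
  finP : periods.Finite

def LinSet.toSet {n : ℕ} (L : LinSet n) : Set (Fin n → ℤ) :=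
  {x | ∃ p ∈ AddSubmonoid.closure L.periods, x = L.base + p}

def inBox {n : ℕ} (k : ℕ) (x : Fin n → ℤ) : Prop :=
  ∀ j, -(k : ℤ) ≤ x j ∧ x j ≤ (k : ℤ)

/-- Reachability in the ε-NFA underlying the `k`-th regular approximation of `L`:
states are vectors in `[-k,k]^n`, letters move by their effect, ε-transitions
subtract a period. -/
inductive KReach {n : ℕ} (L : LinSet n) (k : ℕ) :
    (Fin n → ℤ) → List (Sig n) → (Fin n → ℤ) → Prop
  | refl (x : Fin n → ℤ) (h : inBox k x) : KReach L k x [] x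
  | letter {x y : Fin n → ℤ} {w : List (Sig n)} (a : Sig n)
      (h : inBox k x) (h' : inBox k (x + letterEff a)) :
      KReach L k (x + letterEff a) w y → KReach L k x (a :: w) y
  | eps {x y : Fin n → ℤ} {w : List (Sig n)} {p : Fin n → ℤ}
      (hp : p ∈ L.periods) (h : inBox k x) (h' : inBox k (x - p)) :
      KReach L k (x - p) w y → KReach L k x w y

/-- The `k`-th regular approximation `K^k(L)`. -/
def KApprox {n : ℕ} (L : LinSet n) (k : ℕ) : Language (Sig n) :=
  {w | ∃ y, KReach L k 0 w y ∧ y ∈ L.toSet}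

/-! ### The `⊕⁺` operation and the families `R_ℓ` -/

def posPlus {n : ℕ} (K L : Set (Fin n → ℤ)) : Set (Fin n → ℤ) :=
  {x | (∀ j, 0 ≤ x j) ∧ ∃ a ∈ K, (∀ j, 0 ≤ a j) ∧ ∃ b ∈ L, x = a + b}

def posFoldAux {n : ℕ} : Set (Fin n → ℤ) → List (Set (Fin n → ℤ)) → Set (Fin n → ℤ)
  | S, [] => S
  | S, L :: Ls => posFoldAux (posPlus S L) Ls

/-- `posFold [L₁, …, L_ℓ] = L₁ ⊕⁺ ⋯ ⊕⁺ L_ℓ` (associated to the left); for `ℓ = 1`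
it is `L₁` itself. -/
def posFold {n : ℕ} : List (Set (Fin n → ℤ)) → Set (Fin n → ℤ)
  | [] => ∅
  | L :: Ls => posFoldAux L Ls

/-- The family `R_ℓ`. -/
def RFam (n ℓ : ℕ) : Set (Language (Sig n)) :=
  {K | ∃ (k : ℕ) (Ls : List (LinSet n)), Ls.length = ℓ ∧
      (0 : Fin n → ℤ) ∉ posFold (Ls.map LinSet.toSet) ∧
      K = (Ls.map (fun L => KApprox L k)).prod}

/-- `R_{≤ m} = ⋃_{1 ≤ i ≤ m} R_i`. -/
def RleFam (n m : ℕ) : Set (Language (Sig n)) :=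
  ⋃ i ∈ Set.Icc 1 m, RFam n i

/-- `R = ⋃_{ℓ ≥ 1} R_ℓ`. -/
def RAll (n : ℕ) : Set (Language (Sig n)) :=
  ⋃ i ∈ Set.Ici 1, RFam n i

/-! ### Basic separator sets -/

def IsBasicSepSet {n : ℕ} (S : Language (Sig n)) (B : Set (Language (Sig n))) : Prop :=
  (∀ K ∈ B, K.IsRegular ∧ ∀ w ∈ K, w ∉ S) ∧
  (∀ L : Language (Sig n), L.IsRegular → (∀ w ∈ L, w ∉ S) →
    ∃ F ⊆ B, F.Finite ∧ ∀ w ∈ L, ∃ K ∈ F, w ∈ K)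

/-! Extra defs for specific statements -/

/-- `u ∼_A v`: the words induce the same state transformation in the DFA `M`. -/
def simEq {α σ : Type} (M : DFA α σ) (u v : List α) : Prop :=
  ∀ p : σ, M.evalFrom p u = M.evalFrom p v

/-- Assemble `w₀ m₁ w₁ ⋯ m_k w_k` over `Σ ⊎ Σ#` (`Sum.inl` = plain, `Sum.inr` = marked). -/
def assemble {α : Type} : List (List α) → List α → List (α ⊕ α)
  | [], _ => []
  | w :: _, [] => w.map Sum.inl
  | w :: ws, m :: ms => w.map Sum.inl ++ Sum.inr m :: assemble ws ms

/-- The set of effects of a language. -/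
def effSet {n : ℕ} (L : Language (Sig n)) : Set (Fin n → ℤ) :=
  {v | ∃ w ∈ L, wordEff w = v}

/-- `Mod(μ, v)`. -/
def ModLang (n μ : ℕ) (v : Fin n → ℤ) : Language (Sig n) :=
  {w | ∀ j, wordEff w j ≡ v j [ZMOD (μ : ℤ)]}

/-- `ModSet(μ, v)`: base `v`, periods `{±μ·e_i}`. -/
def ModSet (n μ : ℕ) (v : Fin n → ℤ) : LinSet n where
  base := v
  periods := (Set.range fun i : Fin n => (μ : ℤ) • Pi.single i (1 : ℤ)) ∪
    (Set.range fun i : Fin n => -((μ : ℤ) • Pi.single i (1 : ℤ)))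
  finP := (Set.finite_range _).union (Set.finite_range _)

/-- `Cov(k, i)`. -/
def CovLang (n k : ℕ) (i : Fin n) : Language (Sig n) :=
  {x | ∃ w w', x = w ++ w' ∧ wordEff w i < 0 ∧
      ∀ u, u <+: w → u ≠ w → 0 ≤ wordEff u i ∧ wordEff u i ≤ (k : ℤ)}

/-- `L_{neg,i}`: base `-e_i`, periods `{±e_j : j ≠ i}`. -/
def LNeg (n : ℕ) (i : Fin n) : LinSet n where
  base := -Pi.single i 1
  periods := ((fun j : Fin n => Pi.single j (1 : ℤ)) '' {j | j ≠ i}) ∪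
    ((fun j : Fin n => -Pi.single j (1 : ℤ)) '' {j | j ≠ i})
  finP := ((Set.toFinite _).image _).union ((Set.toFinite _).image _)

/-- `Z`: base `0`, periods `{±e_j}`. -/
def ZSet (n : ℕ) : LinSet n where
  base := 0
  periods := (Set.range fun j : Fin n => Pi.single j (1 : ℤ)) ∪
    (Set.range fun j : Fin n => -Pi.single j (1 : ℤ))
  finP := (Set.finite_range _).union (Set.finite_range _)

/-! The language `C_ℓ` over `Σ₂` -/

def ltrA1 : Sig 2 := (0, true)
def ltrA2 : Sig 2 := (1, true)
def ltrB1 : Sig 2 := (0, false)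
def ltrB2 : Sig 2 := (1, false)

def fwdWord (j : ℕ) : List (Sig 2) := ltrA1 :: List.replicate j ltrA2
def bwdWord (j : ℕ) : List (Sig 2) := ltrB1 :: List.replicate j ltrB2

def segLang (j : ℕ) : Language (Sig 2) :=
  KStar.kstar ({fwdWord j, bwdWord j} : Language (Sig 2))

def aPlusLang : Language (Sig 2) :=
  {w | ∃ m : ℕ, 0 < m ∧ w = List.replicate m ltrA1}

def CLang (ℓ : ℕ) : Language (Sig 2) :=
  aPlusLang * ((List.range ℓ).map (fun j => segLang (j + 1))).prod

/-!
Fix coordinates `c0 ≠ c1` and `N = ℓ + 1`. The automaton `slopeDFA` reads a nonempty block of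
letters `a_{c0}` followed by blocks `a_{c1}^i a_{c0}` or `ā_{c1}^i ā_{c0}` whose slopes
`i ∈ [1, N]` never decrease. Along a word with nonnegative prefixes it keeps `j·x₀ - x₁ ≥ 1` for
the current slope `j`, so its language is regular and misses `D_n`; a basic separator set would
cover it by finitely many members of `R_{≤ℓ}`, all built with some `k ≤ K`.

Take `G > (2K+1)^n` and the word `a_{c0}^{G!} ∏_{j ≤ N} (a_{c1}^j a_{c0})^G (ā_{c1}^j ā_{c0})^G`
of that language. It contains `ℓ` disjoint gates `(ā_{c1}^j ā_{c0})^G (a_{c1}^{j+1} a_{c0})^G` but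
is cut into at most `ℓ` factors, so some factor `u ∈ K^k(L)` contains a whole gate. In the box
`[-k,k]^n` each half of the gate is read along a loop, hence `G!·(j+1)·(-1,-j)` and
`G!·j·(1,j+1)` are sums of periods of `L`; together they make `-G!·e_{c0}`. So
`Δ(u) - G!·e_{c0} ∈ L`, and as every prefix reaching past the initial `a_{c0}^{G!}` has effect at
least `G!·e_{c0}`, the effects of the factors, with this one shifted, put `0` into
`L₁ ⊕⁺ ⋯ ⊕⁺ L_t`.
-/

section

open List

variable {n : ℕ}

theorem wordEff_nil : wordEff ([] : List (Sig n)) = 0 := rfl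

theorem wordEff_cons (a : Sig n) (w : List (Sig n)) :
    wordEff (a :: w) = letterEff a + wordEff w := by
  simp [wordEff]

theorem wordEff_append (u v : List (Sig n)) : wordEff (u ++ v) = wordEff u + wordEff v := by
  simp [wordEff]

theorem wordEff_replicate (q : ℕ) (a : Sig n) : wordEff (replicate q a) = q • letterEff a := by
  simp [wordEff]

theorem wordEff_flatten (ws : List (List (Sig n))) :
    wordEff ws.flatten = (ws.map wordEff).sum := by
  induction ws with
  | nil => rfl
  | cons w ws ih => simp [wordEff_append, ih]

theorem wordEff_flatten_replicate (q : ℕ) (w : List (Sig n)) :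
    wordEff (replicate q w).flatten = q • wordEff w := by
  simp [wordEff_flatten]

theorem letterEff_false (c : Fin n) : letterEff ((c, false) : Sig n) = -letterEff (c, true) := by
  funext j
  by_cases h : j = c <;> simp [letterEff, h]

theorem wordEff_nonneg_of_forall_snd_eq_true {w : List (Sig n)} (h : ∀ a ∈ w, a.2 = true) :
    0 ≤ wordEff w := by
  induction w with
  | nil => exact le_rfl
  | cons a w ih =>
    rw [wordEff_cons]
    refine add_nonneg (fun j => ?_) (ih fun b hb => h b (mem_cons_of_mem a hb))
    simp only [letterEff, h a mem_cons_self, Pi.zero_apply]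
    split_ifs <;> simp

theorem wordEff_nonpos_of_forall_snd_eq_false {w : List (Sig n)} (h : ∀ a ∈ w, a.2 = false) :
    wordEff w ≤ 0 := by
  induction w with
  | nil => exact le_rfl
  | cons a w ih =>
    rw [wordEff_cons]
    refine add_nonpos (fun j => ?_) (ih fun b hb => h b (mem_cons_of_mem a hb))
    simp only [letterEff, h a mem_cons_self, Pi.zero_apply]
    split_ifs <;> simp_all

theorem List.prefix_append_iff {α : Type*} {u x y : List α} :
    u <+: x ++ y ↔ u <+: x ∨ ∃ v, v <+: y ∧ u = x ++ v := by
  refine ⟨fun h => ?_, ?_⟩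
  · rcases le_total u.length x.length with hle | hlt
    · exact Or.inl (prefix_of_prefix_length_le h (prefix_append x y) hle)
    · obtain ⟨v, rfl⟩ := prefix_of_prefix_length_le (prefix_append x y) h hlt
      exact Or.inr ⟨v, (prefix_append_right_inj x).1 h, rfl⟩
  · rintro (h | ⟨v, hv, rfl⟩)
    · exact h.trans (prefix_append x y)
    · exact (prefix_append_right_inj x).2 hv

theorem append_mem_covDyck {u v : List (Sig n)} (hu : u ∈ CovDyck n) (hv : v ∈ CovDyck n) :
    u ++ v ∈ CovDyck n := by
  intro p hp j
  rcases List.prefix_append_iff.1 hp with hp | ⟨q, hq, rfl⟩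
  · exact hu p hp j
  · rw [wordEff_append]
    exact add_nonneg (hu u prefix_rfl j) (hv q hq j)

theorem flatten_mem_covDyck {ws : List (List (Sig n))} (h : ∀ w ∈ ws, w ∈ CovDyck n) :
    ws.flatten ∈ CovDyck n := by
  induction ws with
  | nil => intro _ hp j; simp [prefix_nil.1 hp, wordEff_nil]
  | cons w ws ih =>
    exact append_mem_covDyck (h w mem_cons_self) (ih fun v hv => h v (mem_cons_of_mem w hv))

theorem mem_covDyck_of_append {u v : List (Sig n)} (h : u ++ v ∈ CovDyck n) : u ∈ CovDyck n :=
  fun p hp => h p (hp.trans (prefix_append u v))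

theorem mem_covDyck_of_forall_snd_eq_true {w : List (Sig n)} (h : ∀ a ∈ w, a.2 = true) :
    w ∈ CovDyck n :=
  fun _ hp => wordEff_nonneg_of_forall_snd_eq_true fun a ha => h a (hp.subset ha)

theorem append_mem_covDyck_of_descent {u v : List (Sig n)} (hu : ∀ a ∈ u, a.2 = true)
    (hv : ∀ a ∈ v, a.2 = false) (huv : 0 ≤ wordEff (u ++ v)) : u ++ v ∈ CovDyck n := by
  intro p hp j
  rcases List.prefix_append_iff.1 hp with hp | ⟨q, ⟨r, rfl⟩, rfl⟩
  · exact mem_covDyck_of_forall_snd_eq_true hu p hp j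
  · have hr := wordEff_nonpos_of_forall_snd_eq_false fun a ha => hv a (mem_append_right q ha)
    have := huv j
    simp only [wordEff_append, Pi.add_apply] at this ⊢
    linarith [hr j]

theorem wordEff_le_of_prefix {x p v : List (Sig n)} (hv : v ∈ CovDyck n) (hxp : x <+: p)
    (hp : p <+: x ++ v) : wordEff x ≤ wordEff p := by
  obtain ⟨r, rfl⟩ := hxp
  rw [wordEff_append]
  exact le_add_of_nonneg_right (hv r ((prefix_append_right_inj x).1 hp))

theorem exists_lt_map_eq_of_inBox {k q : ℕ} (f : ℕ → Fin n → ℤ) (hf : ∀ r ≤ q, inBox k (f r))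
    (hq : (2 * k + 1) ^ n < q + 1) : ∃ i j, i < j ∧ j ≤ q ∧ f i = f j := by
  let box : Finset (Fin n → ℤ) := Fintype.piFinset fun _ => Finset.Icc (-(k : ℤ)) k
  have hbox : box.card = (2 * k + 1) ^ n := by
    simp only [box, Fintype.card_piFinset, Int.card_Icc, Finset.prod_const, Finset.card_univ,
      Fintype.card_fin]
    congr 1
    omega
  have hmaps : ∀ r ∈ Finset.range (q + 1), f r ∈ box := fun r hr =>
    Fintype.mem_piFinset.2 fun c =>
      Finset.mem_Icc.2 (hf r (Nat.lt_succ_iff.1 (Finset.mem_range.1 hr)) c)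
  obtain ⟨i, hi, j, hj, hij, heq⟩ := Finset.exists_ne_map_eq_of_card_lt_of_maps_to
    (by simpa [hbox] using hq) hmaps
  simp only [Finset.mem_range] at hi hj
  rcases lt_or_gt_of_ne hij with h | h
  · exact ⟨i, j, h, by omega, heq⟩
  · exact ⟨j, i, h, by omega, heq.symm⟩

namespace KReach

variable {L : LinSet n} {k : ℕ} {x y z : Fin n → ℤ} {w u v b : List (Sig n)}

theorem inBox_left (h : KReach L k x w y) : inBox k x := by
  cases h with
  | refl _ h | letter _ h | eps _ h => exact h

theorem inBox_right (h : KReach L k x w y) : inBox k y := by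
  induction h with
  | refl _ h => exact h
  | letter _ _ _ _ ih | eps _ _ _ _ ih => exact ih

theorem exists_wordEff_eq (h : KReach L k x w y) :
    ∃ ρ ∈ AddSubmonoid.closure L.periods, wordEff w = y - x + ρ := by
  induction h with
  | refl => exact ⟨0, zero_mem _, by simp [wordEff_nil]⟩
  | letter a _ _ _ ih =>
    obtain ⟨ρ, hρ, heff⟩ := ih
    exact ⟨ρ, hρ, by rw [wordEff_cons, heff]; abel⟩
  | eps hp _ _ _ ih =>
    obtain ⟨ρ, hρ, heff⟩ := ih
    exact ⟨_ + ρ, add_mem (AddSubmonoid.subset_closure hp) hρ, by rw [heff]; abel⟩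

theorem append (h₁ : KReach L k x u y) (h₂ : KReach L k y v z) : KReach L k x (u ++ v) z := by
  induction h₁ with
  | refl => exact h₂
  | letter a h h' _ ih => exact .letter a h h' (ih h₂)
  | eps hp h h' _ ih => exact .eps hp h h' (ih h₂)

theorem exists_of_append (h : KReach L k x (u ++ v) y) :
    ∃ z, KReach L k x u z ∧ KReach L k z v y := by
  generalize hw : u ++ v = w at h
  induction h generalizing u with
  | refl x hx =>
    obtain ⟨rfl, rfl⟩ := append_eq_nil_iff.1 hw
    exact ⟨x, .refl x hx, .refl x hx⟩
  | @letter x _ _ a h h' hr ih =>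
    cases u with
    | nil =>
      rw [nil_append] at hw
      exact ⟨x, .refl x h, hw ▸ .letter a h h' hr⟩
    | cons b u =>
      rw [cons_append, cons.injEq] at hw
      obtain ⟨rfl, hw⟩ := hw
      obtain ⟨z, h₁, h₂⟩ := ih hw
      exact ⟨z, .letter b h h' h₁, h₂⟩
  | eps hp h h' _ ih =>
    obtain ⟨z, h₁, h₂⟩ := ih hw
    exact ⟨z, .eps hp h h' h₁, h₂⟩

theorem exists_of_infix (h : KReach L k x w y) (huw : u <:+: w) : ∃ z z', KReach L k z u z' := by
  obtain ⟨s, t, rfl⟩ := huw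
  obtain ⟨z, h₁, -⟩ := exists_of_append h
  obtain ⟨z', -, h₂⟩ := exists_of_append h₁
  exact ⟨z', z, h₂⟩


theorem exists_states_of_flatten_replicate {q : ℕ} (h : KReach L k x (replicate q b).flatten y) :
    ∃ f : ℕ → Fin n → ℤ, f 0 = x ∧ ∀ r < q, KReach L k (f r) b (f (r + 1)) := by
  induction q generalizing x with
  | zero => exact ⟨fun _ => x, rfl, by simp⟩
  | succ q ih =>
    rw [replicate_succ, flatten_cons] at h
    obtain ⟨z, h₁, h₂⟩ := exists_of_append h
    obtain ⟨f, hf0, hf⟩ := ih h₂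
    refine ⟨fun r => if r = 0 then x else f (r - 1), rfl, fun r hr => ?_⟩
    cases r with
    | zero => simpa [hf0] using h₁
    | succ r => simpa using hf r (by omega)

theorem flatten_replicate_of_states {q : ℕ} {f : ℕ → Fin n → ℤ}
    (hf : ∀ r < q, KReach L k (f r) b (f (r + 1))) {i j : ℕ} (hij : i < j) (hj : j ≤ q) :
    KReach L k (f i) (replicate (j - i) b).flatten (f j) := by
  induction j, hij using Nat.le_induction with
  | base => simpa [Nat.add_sub_cancel_left] using hf i (by omega)
  | succ j hij ih =>
    rw [show j + 1 - i = (j - i) + 1 by omega, replicate_succ', flatten_append, flatten_singleton]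
    exact (ih (by omega)).append (hf j (by omega))

/-- Pigeonhole on the `(2k+1)^n` states of the box: some `d` consecutive copies of `b` are read
along a loop, whose effect is a sum of periods. -/
theorem exists_nsmul_mem_closure {q : ℕ} (h : KReach L k x (replicate q b).flatten y)
    (hq : (2 * k + 1) ^ n < q) :
    ∃ d, 1 ≤ d ∧ d ≤ q ∧ d • wordEff b ∈ AddSubmonoid.closure L.periods := by
  obtain ⟨f, -, hf⟩ := exists_states_of_flatten_replicate h
  have hbox : ∀ r ≤ q, inBox k (f r) := by
    intro r hr
    rcases hr.lt_or_eq with hr | rfl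
    · exact (hf r hr).inBox_left
    · simpa [Nat.sub_add_cancel (show 1 ≤ r by omega)] using (hf (r - 1) (by omega)).inBox_right
  obtain ⟨i, j, hij, hj, heq⟩ := exists_lt_map_eq_of_inBox f hbox (by omega)
  obtain ⟨ρ, hρ, heff⟩ := (flatten_replicate_of_states hf hij hj).exists_wordEff_eq
  refine ⟨j - i, by omega, by omega, ?_⟩
  rw [wordEff_flatten_replicate, heq, sub_self, zero_add] at heff
  exact heff ▸ hρ

theorem factorial_nsmul_mem_closure {q : ℕ} (h : KReach L k x (replicate q b).flatten y)
    (hq : (2 * k + 1) ^ n < q) : q.factorial • wordEff b ∈ AddSubmonoid.closure L.periods := by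
  obtain ⟨d, hd1, hdq, hd⟩ := exists_nsmul_mem_closure h hq
  obtain ⟨c, hc⟩ := Nat.dvd_factorial hd1 hdq
  rw [hc, mul_comm, mul_smul]
  exact AddSubmonoid.nsmul_mem _ hd c

end KReach

theorem LinSet.add_mem_toSet {L : LinSet n} {a ρ : Fin n → ℤ} (ha : a ∈ L.toSet)
    (hρ : ρ ∈ AddSubmonoid.closure L.periods) : a + ρ ∈ L.toSet := by
  obtain ⟨p, hp, rfl⟩ := ha
  exact ⟨p + ρ, add_mem hp hρ, by abel⟩

theorem wordEff_mem_toSet_of_mem_KApprox {L : LinSet n} {k : ℕ} {u : List (Sig n)}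
    (h : u ∈ KApprox L k) : wordEff u ∈ L.toSet := by
  obtain ⟨y, hr, hy⟩ := h
  obtain ⟨ρ, hρ, heff⟩ := hr.exists_wordEff_eq
  rw [heff, sub_zero]
  exact LinSet.add_mem_toSet hy hρ

theorem Language.exists_forall₂_of_mem_prod_map {α β : Type*} (f : β → Language α) {w : List α} :
    ∀ {Ls : List β}, w ∈ (Ls.map f).prod → ∃ us, us.flatten = w ∧ Forall₂ (fun u L => u ∈ f L) us Ls
  | [], hw => ⟨[], (Language.mem_one w).1 hw ▸ rfl, .nil⟩
  | L :: Ls, hw => by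
    rw [map_cons, prod_cons] at hw
    obtain ⟨u, hu, v, hv, rfl⟩ := Language.mem_mul.1 hw
    obtain ⟨us, rfl, hus⟩ := exists_forall₂_of_mem_prod_map f hv
    exact ⟨u :: us, rfl, .cons hu hus⟩

theorem forall₂_map_wordEff_of_mem_KApprox {k : ℕ} {us : List (List (Sig n))} {Ls : List (LinSet n)}
    (h : Forall₂ (fun u L => u ∈ KApprox L k) us Ls) :
    Forall₂ (· ∈ ·) (us.map wordEff) (Ls.map LinSet.toSet) :=
  forall₂_map_left_iff.2 <| forall₂_map_right_iff.2 <|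
    h.imp fun _ _ => wordEff_mem_toSet_of_mem_KApprox

theorem posFoldAux_mem {S : Set (Fin n → ℤ)} {s : Fin n → ℤ} (hs : s ∈ S)
    {as : List (Fin n → ℤ)} {Ss : List (Set (Fin n → ℤ))} (h : Forall₂ (· ∈ ·) as Ss)
    (hpre : ∀ p, p <+: as → ∀ c, 0 ≤ (s + p.sum) c) : s + as.sum ∈ posFoldAux S Ss := by
  induction h generalizing S s with
  | nil => simpa [posFoldAux] using hs
  | @cons a T as Ts ha _ ih =>
    have hsa : s + a ∈ posPlus S T :=
      ⟨by simpa using hpre [a] (by simp), s, hs, by simpa using hpre [] (by simp), a, ha, rfl⟩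
    rw [sum_cons, ← add_assoc]
    exact ih hsa fun p hp c => by simpa [add_assoc] using hpre (a :: p) (by simpa using hp) c

theorem posFold_mem {as : List (Fin n → ℤ)} {Ss : List (Set (Fin n → ℤ))}
    (h : Forall₂ (· ∈ ·) as Ss) (hne : as ≠ [])
    (hpre : ∀ p, p <+: as → p ≠ [] → ∀ c, 0 ≤ p.sum c) : as.sum ∈ posFold Ss := by
  cases h with
  | nil => exact absurd rfl hne
  | cons ha h =>
    rw [sum_cons]
    exact posFoldAux_mem ha h fun p hp c => by
      simpa using hpre (_ :: p) (by simpa using hp) (by simp) c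

theorem List.exists_window_subset_factor {α : Type*} {P Q : List α} {Ss : List (List α)}
    (hS : ∀ S ∈ Ss, S ≠ []) (hSs : Ss ≠ []) :
    ∀ {us : List (List α)}, us.flatten = P ++ Ss.flatten ++ Q → us.length ≤ Ss.length →
      ∃ us₁ u us₂ x y S, us = us₁ ++ u :: us₂ ∧ S ∈ Ss ∧ u = x ++ S ++ y ∧ P <+: us₁.flatten ++ x
  | [], hw, _ => by
    obtain ⟨S, hSmem⟩ := exists_mem_of_ne_nil Ss hSs
    have : S = [] := by simp_all
    exact absurd this (hS S hSmem)
  | u :: us, hw, hlen => by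
    obtain ⟨S, Ss', rfl⟩ := exists_cons_of_ne_nil hSs
    rw [flatten_cons, flatten_cons, append_assoc, append_assoc] at hw
    rcases append_eq_append_iff.1 hw with ⟨P', rfl, hus⟩ | ⟨c, rfl, hc⟩
    · obtain ⟨us₁, u', us₂, x, y, S', rfl, hS', rfl, hP⟩ :=
        exists_window_subset_factor hS hSs (P := P') (by simpa using hus)
          (by simp only [length_cons] at hlen ⊢; omega)
      exact ⟨u :: us₁, _, us₂, x, y, S', rfl, hS', rfl, by simpa using hP⟩
    · rcases append_eq_append_iff.1 hc.symm with ⟨r, rfl, hus⟩ | ⟨y, rfl, -⟩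
      · rcases Ss' with _ | ⟨S', Ss'⟩
        · obtain rfl : us = [] := length_eq_zero_iff.1 (by simpa using hlen)
          obtain ⟨rfl, -⟩ : r = [] ∧ Q = [] := by simpa using hus
          exact ⟨[], P ++ c, [], P, [], c ++ [], rfl, mem_cons_self, by simp, by simp⟩
        · obtain ⟨us₁, u', us₂, x, y, S'', rfl, hS'', rfl, hP⟩ :=
            exists_window_subset_factor (fun S hS' => hS S (mem_cons_of_mem _ hS'))
              (cons_ne_nil _ _)
              (P := r) (by simpa using hus) (by simp only [length_cons] at hlen ⊢; omega)
          exact ⟨(P ++ c) :: us₁, _, us₂, x, y, S'', rfl, mem_cons_of_mem _ hS'', rfl,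
            by simp⟩
      · exact ⟨[], P ++ (S ++ y), us, P, y, S, rfl, mem_cons_self, by simp, by simp⟩

theorem List.Forall₂.exists_of_append_cons {α β : Type*} {R : α → β → Prop} {a : α} {l₂ : List α} :
    ∀ {l₁ : List α} {m : List β}, Forall₂ R (l₁ ++ a :: l₂) m →
      ∃ m₁ b m₂, m = m₁ ++ b :: m₂ ∧ Forall₂ R l₁ m₁ ∧ R a b ∧ Forall₂ R l₂ m₂
  | [], _, .cons hab h => ⟨[], _, _, rfl, .nil, hab, h⟩
  | _ :: _, _, .cons hab h =>
    let ⟨m₁, b, m₂, hm, h₁, hb, h₂⟩ := exists_of_append_cons h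
    ⟨_ :: m₁, b, m₂, hm ▸ rfl, .cons hab h₁, hb, h₂⟩

theorem sum_nonneg_of_prefix_map_wordEff {us₁ us₂ : List (List (Sig n))} {u : List (Sig n)}
    {δ : Fin n → ℤ} (hw : (us₁ ++ u :: us₂).flatten ∈ CovDyck n)
    (hδ : ∀ p, us₁.flatten ++ u <+: p → p <+: (us₁ ++ u :: us₂).flatten → δ ≤ wordEff p) :
    ∀ p, p <+: us₁.map wordEff ++ (wordEff u - δ) :: us₂.map wordEff → 0 ≤ p.sum := by
  have hflat : (us₁ ++ u :: us₂).flatten = us₁.flatten ++ u ++ us₂.flatten := by simp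
  intro p hp
  rcases List.prefix_append_iff.1 hp with hp | ⟨r, hr, rfl⟩
  · obtain ⟨q, hq, rfl⟩ := prefix_map_iff.1 hp
    rw [← wordEff_flatten]
    exact hw _ (hq.flatten.trans (by simp))
  rcases prefix_cons_iff.1 hr with rfl | ⟨t, rfl, ht⟩
  · rw [append_nil, ← wordEff_flatten]
    exact hw _ (by simp)
  obtain ⟨q, hq, rfl⟩ := prefix_map_iff.1 ht
  have := hδ (us₁.flatten ++ u ++ q.flatten) (prefix_append _ _)
    (hflat ▸ (prefix_append_right_inj _).2 hq.flatten)
  simp only [wordEff_append, wordEff_flatten] at this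
  simp only [sum_append, sum_cons]
  rw [← sub_nonneg] at this
  convert this using 1
  abel

theorem zero_mem_posFold_of_factor_sub {k : ℕ} {us₁ us₂ : List (List (Sig n))}
    {u : List (Sig n)} {Ls₁ Ls₂ : List (LinSet n)} {L : LinSet n} {δ : Fin n → ℤ}
    (h₁ : Forall₂ (fun u L => u ∈ KApprox L k) us₁ Ls₁)
    (h₂ : Forall₂ (fun u L => u ∈ KApprox L k) us₂ Ls₂) (hu : wordEff u - δ ∈ L.toSet)
    (hw : (us₁ ++ u :: us₂).flatten ∈ CovDyck n) (hwδ : wordEff (us₁ ++ u :: us₂).flatten = δ)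
    (hδ : ∀ p, us₁.flatten ++ u <+: p → p <+: (us₁ ++ u :: us₂).flatten → δ ≤ wordEff p) :
    (0 : Fin n → ℤ) ∈ posFold ((Ls₁ ++ L :: Ls₂).map LinSet.toSet) := by
  have hmem : Forall₂ (· ∈ ·) (us₁.map wordEff ++ (wordEff u - δ) :: us₂.map wordEff)
      ((Ls₁ ++ L :: Ls₂).map LinSet.toSet) := by
    rw [map_append, map_cons]
    exact rel_append (forall₂_map_wordEff_of_mem_KApprox h₁)
      (.cons hu (forall₂_map_wordEff_of_mem_KApprox h₂))
  convert posFold_mem hmem (by simp) fun p hp _ c => sum_nonneg_of_prefix_map_wordEff hw hδ p hp c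
  simp only [wordEff_flatten, map_append, map_cons, sum_append, sum_cons] at hwδ ⊢
  rw [← hwδ]
  abel

namespace DyckWitness

section Words

variable (c0 c1 : Fin n)

def block (b : Bool) (j : ℕ) : List (Sig n) := replicate j (c1, b) ++ [(c0, b)]

def blockRun (b : Bool) (j q : ℕ) : List (Sig n) := (replicate q (block c0 c1 b j)).flatten

def phase (G j : ℕ) : List (Sig n) := blockRun c0 c1 true j G ++ blockRun c0 c1 false j G

def gate (G j : ℕ) : List (Sig n) := blockRun c0 c1 false j G ++ blockRun c0 c1 true (j + 1) G

def witness (m G N : ℕ) : List (Sig n) :=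
  replicate m (c0, true) ++ ((range N).map fun j => phase c0 c1 G (j + 1)).flatten

theorem witness_succ (m G N : ℕ) :
    witness c0 c1 m G (N + 1) = witness c0 c1 m G N ++ phase c0 c1 G (N + 1) := by
  simp [witness, range_succ]

theorem witness_eq_gates (m G N : ℕ) :
    witness c0 c1 m G (N + 1) = (replicate m (c0, true) ++ blockRun c0 c1 true 1 G) ++
      ((range N).map fun j => gate c0 c1 G (j + 1)).flatten ++ blockRun c0 c1 false (N + 1) G := by
  induction N with
  | zero => simp [witness, phase]
  | succ N ih => rw [witness_succ, ih]; simp [range_succ, phase, gate]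

variable {c0 c1}

theorem wordEff_block_false (j : ℕ) :
    wordEff (block c0 c1 false j) = -wordEff (block c0 c1 true j) := by
  simp [block, wordEff_append, wordEff_replicate, wordEff_cons, wordEff_nil, letterEff_false]
  abel

theorem wordEff_phase (G j : ℕ) : wordEff (phase c0 c1 G j) = 0 := by
  simp [phase, blockRun, wordEff_append, wordEff_flatten_replicate, wordEff_block_false]

theorem wordEff_witness (m G N : ℕ) :
    wordEff (witness c0 c1 m G N) = m • letterEff (c0, true) := by
  induction N with
  | zero => simp [witness, wordEff_replicate]
  | succ N ih => rw [witness_succ, wordEff_append, ih, wordEff_phase, add_zero]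

theorem phase_mem_covDyck (G j : ℕ) : phase c0 c1 G j ∈ CovDyck n := by
  refine append_mem_covDyck_of_descent ?_ ?_ (by rw [← phase, wordEff_phase])
  · simp [blockRun, block]
  · simp [blockRun, block]

theorem witness_mem_covDyck (m G N : ℕ) : witness c0 c1 m G N ∈ CovDyck n :=
  append_mem_covDyck (mem_covDyck_of_forall_snd_eq_true (by simp))
    (flatten_mem_covDyck (by simp [phase_mem_covDyck]))

theorem gate_pump_eq (m j : ℕ) :
    ((j + 1) * m) • wordEff (block c0 c1 false j) + (j * m) • wordEff (block c0 c1 true (j + 1))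
      = -(m • letterEff ((c0, true) : Sig n)) := by
  simp only [block, wordEff_append, wordEff_replicate, wordEff_cons, wordEff_nil, add_zero,
    letterEff_false]
  module

theorem blockRun_ne_nil (b : Bool) (j : ℕ) {q : ℕ} (hq : 1 ≤ q) : blockRun c0 c1 b j q ≠ [] := by
  obtain ⟨q, rfl⟩ : ∃ q', q = q' + 1 := ⟨q - 1, by omega⟩
  simp [blockRun, block]

end Words

inductive SlopeState (N : ℕ) : Type
  | start
  | dead
  | slope (j : Fin (N + 1))
  | climb (b : Bool) (j i : Fin (N + 1))
  deriving Fintype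

section Automaton

variable (c0 c1 : Fin n) (N : ℕ)

def slopeStep : SlopeState N → Sig n → SlopeState N
  | .start, a => if a = (c0, true) then .slope 0 else .dead
  | .slope j, a =>
    if a = (c0, true) ∧ j = 0 then .slope 0
    else if h : a.1 = c1 ∧ 1 ≤ N then .climb a.2 j ⟨1, by omega⟩ else .dead
  | .climb b j i, a =>
    if h : a = (c1, b) ∧ i.val + 1 ≤ N then .climb b j ⟨i + 1, by omega⟩
    else if a = (c0, b) ∧ j ≤ i then .slope i else .dead
  | .dead, _ => .dead

def slopeDFA : DFA (Sig n) (SlopeState N) where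
  step := slopeStep c0 c1 N
  start := .start
  accept := {s | ∃ j, s = .slope j}

def slopeLang : Language (Sig n) := (slopeDFA c0 c1 N).accepts

theorem slopeLang_isRegular : (slopeLang c0 c1 N).IsRegular :=
  ⟨SlopeState N, inferInstance, slopeDFA c0 c1 N, rfl⟩

/-- At slope `0` only letters `(c0, true)` have been read, so there the bound is `x₀ - x₁ ≥ 1`. -/
def SlopeInv (j : ℕ) (v : List (Sig n)) : Prop :=
  v ∈ CovDyck n → 1 ≤ (max j 1 : ℤ) * wordEff v c0 - wordEff v c1

def StateInv {N : ℕ} : SlopeState N → List (Sig n) → Prop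
  | .start, v => v = []
  | .dead, _ => True
  | .slope j, v => SlopeInv c0 c1 j v
  | .climb b j i, v => 1 ≤ (i : ℕ) ∧ ∃ v', SlopeInv c0 c1 j v' ∧ v = v' ++ replicate i (c1, b)

variable {c0 c1 N}

theorem evalFrom_climb_replicate (b : Bool) (j : Fin (N + 1)) (s : ℕ) :
    ∀ (r : ℕ) (hr : r + s ≤ N), (slopeDFA c0 c1 N).evalFrom (.climb b j ⟨r, by omega⟩)
      (replicate s (c1, b)) = .climb b j ⟨r + s, by omega⟩ := by
  induction s with
  | zero => intro r hr; rfl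
  | succ s ih =>
    intro r hr
    rw [replicate_succ, DFA.evalFrom_cons]
    have hstep : (slopeDFA c0 c1 N).step (.climb b j ⟨r, by omega⟩) (c1, b)
        = .climb b j ⟨r + 1, by omega⟩ := by
      simp [slopeDFA, slopeStep, show r + 1 ≤ N by omega]
    rw [hstep, ih (r + 1) (by omega)]
    simp only [add_assoc, add_comm 1 s]

variable (hne : c0 ≠ c1)
include hne

theorem slopeInv_append_block {b : Bool} {j i : ℕ} {v : List (Sig n)} (hji : j ≤ i) (hi : 1 ≤ i)
    (hv : SlopeInv c0 c1 j v) : SlopeInv c0 c1 i (v ++ block c0 c1 b i) := by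
  intro hcov
  have h1 := hv (mem_covDyck_of_append hcov)
  have h0 : 0 ≤ wordEff v c0 := hcov v (prefix_append _ _) c0
  have hmax : max (j : ℤ) 1 ≤ i := max_le (by exact_mod_cast hji) (by exact_mod_cast hi)
  rw [max_eq_left (by exact_mod_cast hi : (1 : ℤ) ≤ i)]
  have := mul_le_mul_of_nonneg_right hmax h0
  cases b <;> simp [block, wordEff_append, wordEff_replicate, wordEff_cons, wordEff_nil, letterEff,
    hne, hne.symm] <;> linarith

theorem slopeInv_zero_append {v : List (Sig n)} (hv : v = [] ∨ SlopeInv c0 c1 0 v) :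
    SlopeInv c0 c1 0 (v ++ [(c0, true)]) := by
  intro hcov
  have heff : ∀ c, wordEff (v ++ [(c0, true)]) c = wordEff v c + if c = c0 then 1 else 0 := by
    intro c
    simp [wordEff_append, wordEff_cons, wordEff_nil, letterEff]
  rw [heff, heff, if_pos rfl, if_neg hne.symm]
  rcases hv with rfl | hv
  · simp [wordEff_nil]
  · have := hv (mem_covDyck_of_append hcov)
    simp only [Nat.cast_zero, zero_le_one, max_eq_right] at this ⊢
    linarith

theorem stateInv_step (s : SlopeState N) (a : Sig n) (v : List (Sig n)) (h : StateInv c0 c1 s v) :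
    StateInv c0 c1 (slopeStep c0 c1 N s a) (v ++ [a]) := by
  cases s with
  | start =>
    simp only [StateInv] at h
    simp only [slopeStep]
    split_ifs with ha
    · exact ha ▸ slopeInv_zero_append hne (Or.inl h)
    · trivial
  | dead => trivial
  | slope j =>
    simp only [slopeStep]
    split_ifs with ha hc
    · obtain ⟨rfl, rfl⟩ := ha
      exact slopeInv_zero_append hne (Or.inr h)
    · obtain ⟨c, b⟩ := a
      obtain ⟨rfl, -⟩ := hc
      exact ⟨le_rfl, v, h, rfl⟩
    · trivial
  | climb b j i =>
    obtain ⟨hi, v', hv', rfl⟩ := h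
    simp only [slopeStep]
    split_ifs with ha hc
    · obtain ⟨rfl, -⟩ := ha
      exact ⟨by simp, v', hv', by simp [replicate_succ']⟩
    · obtain ⟨rfl, hji⟩ := hc
      rw [append_assoc]
      exact slopeInv_append_block hne hji hi hv'
    · trivial

theorem stateInv_evalFrom (v : List (Sig n)) :
    StateInv c0 c1 ((slopeDFA c0 c1 N).evalFrom .start v) v := by
  induction v using List.reverseRecOn with
  | nil => rfl
  | append_singleton v a ih =>
    rw [DFA.evalFrom_append_singleton]
    exact stateInv_step hne _ a v ih

theorem slopeLang_disjoint_dyck {v : List (Sig n)} (hv : v ∈ slopeLang c0 c1 N) : v ∉ Dyck n := by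
  rintro ⟨heff, hcov⟩
  obtain ⟨j, hj⟩ := hv
  have := stateInv_evalFrom (N := N) hne v
  rw [show (slopeDFA c0 c1 N).evalFrom .start v = .slope j from hj] at this
  simpa [heff] using this hcov

theorem evalFrom_slope_block (b : Bool) {j i : Fin (N + 1)} (hji : j ≤ i) (hi : 1 ≤ (i : ℕ)) :
    (slopeDFA c0 c1 N).evalFrom (.slope j) (block c0 c1 b i) = .slope i := by
  obtain ⟨i, hiN⟩ := i
  obtain ⟨i, rfl⟩ : ∃ i', i = 1 + i' := ⟨i - 1, by simp at hi; omega⟩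
  have hfirst : (slopeDFA c0 c1 N).step (.slope j) (c1, b) = .climb b j ⟨1, by omega⟩ := by
    simp [slopeDFA, slopeStep, hne.symm, show 1 ≤ N by omega]
  have hlast : (slopeDFA c0 c1 N).step (.climb b j ⟨1 + i, hiN⟩) (c0, b) = .slope ⟨1 + i, hiN⟩ := by
    simp [slopeDFA, slopeStep, hne, hji]
  rw [block, replicate_add, replicate_one, singleton_append, cons_append, DFA.evalFrom_cons,
    hfirst, DFA.evalFrom_of_append, evalFrom_climb_replicate b j i 1 (by omega)]
  exact hlast

theorem evalFrom_slope_blockRun (b : Bool) {i : Fin (N + 1)} (hi : 1 ≤ (i : ℕ)) (q : ℕ) :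
    (slopeDFA c0 c1 N).evalFrom (.slope i) (blockRun c0 c1 b i q) = .slope i := by
  induction q with
  | zero => rfl
  | succ q ih =>
    rw [blockRun, replicate_succ, flatten_cons, DFA.evalFrom_of_append,
      evalFrom_slope_block hne b le_rfl hi]
    exact ih

theorem evalFrom_slope_phase {G : ℕ} (hG : 1 ≤ G) {j i : Fin (N + 1)} (hji : j ≤ i)
    (hi : 1 ≤ (i : ℕ)) : (slopeDFA c0 c1 N).evalFrom (.slope j) (phase c0 c1 G i) = .slope i := by
  obtain ⟨G, rfl⟩ : ∃ G', G = G' + 1 := ⟨G - 1, by omega⟩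
  rw [phase, blockRun, replicate_succ, flatten_cons, append_assoc, DFA.evalFrom_of_append,
    evalFrom_slope_block hne true hji hi, DFA.evalFrom_of_append, ← blockRun,
    evalFrom_slope_blockRun hne true hi, evalFrom_slope_blockRun hne false hi]

theorem witness_mem_slopeLang {m G : ℕ} (hm : 1 ≤ m) (hG : 1 ≤ G) :
    witness c0 c1 m G N ∈ slopeLang c0 c1 N := by
  suffices h : ∀ M (hM : M ≤ N), (slopeDFA c0 c1 N).evalFrom .start (witness c0 c1 m G M)
      = .slope ⟨M, by omega⟩ from ⟨_, h N le_rfl⟩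
  intro M hM
  induction M with
  | zero =>
    obtain ⟨m, rfl⟩ : ∃ m', m = m' + 1 := ⟨m - 1, by omega⟩
    simp only [witness, range_zero, map_nil, flatten_nil, append_nil]
    induction m with
    | zero => simp [slopeDFA, slopeStep]
    | succ m ih =>
      rw [replicate_succ', DFA.evalFrom_append_singleton, ih (by omega)]
      simp [slopeDFA, slopeStep]
  | succ M ih =>
    rw [witness_succ, DFA.evalFrom_of_append, ih (by omega)]
    exact evalFrom_slope_phase hne hG (Fin.mk_le_mk.2 (by omega)) (by simp)

end Automaton

variable {c0 c1 : Fin n}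

theorem sub_mem_toSet_of_gate_infix {L : LinSet n} {k G j : ℕ} {u : List (Sig n)}
    (hG : (2 * k + 1) ^ n < G) (hu : u ∈ KApprox L k) (hgate : gate c0 c1 G j <:+: u) :
    wordEff u - G.factorial • letterEff ((c0, true) : Sig n) ∈ L.toSet := by
  obtain ⟨z, hrun, hz⟩ := hu
  obtain ⟨s, t, rfl⟩ := hgate
  obtain ⟨_, _, hdown⟩ := hrun.exists_of_infix (u := blockRun c0 c1 false j G)
    ⟨s, blockRun c0 c1 true (j + 1) G ++ t, by simp [gate]⟩
  obtain ⟨_, _, hup⟩ := hrun.exists_of_infix (u := blockRun c0 c1 true (j + 1) G)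
    ⟨s ++ blockRun c0 c1 false j G, t, by simp [gate]⟩
  rw [sub_eq_add_neg]
  refine LinSet.add_mem_toSet (wordEff_mem_toSet_of_mem_KApprox ⟨z, hrun, hz⟩) ?_
  rw [← gate_pump_eq G.factorial j, mul_smul, mul_smul]
  exact add_mem (AddSubmonoid.nsmul_mem _ (hdown.factorial_nsmul_mem_closure hG) _)
    (AddSubmonoid.nsmul_mem _ (hup.factorial_nsmul_mem_closure hG) _)

theorem zero_mem_posFold_of_witness_mem {k G N : ℕ} {Ls : List (LinSet n)}
    (hG : (2 * k + 1) ^ n < G) (hLs : Ls ≠ []) (hlen : Ls.length ≤ N)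
    (hw : witness c0 c1 G.factorial G (N + 1) ∈ (Ls.map fun L => KApprox L k).prod) :
    (0 : Fin n → ℤ) ∈ posFold (Ls.map LinSet.toSet) := by
  have hG1 : 1 ≤ G := by have := Nat.one_le_pow n (2 * k + 1) (by omega); omega
  obtain ⟨us, hus, hfac⟩ := Language.exists_forall₂_of_mem_prod_map _ hw
  obtain ⟨us₁, u, us₂, x, y, S, rfl, hS, rfl, hP⟩ :=
    List.exists_window_subset_factor (Ss := (range N).map fun j => gate c0 c1 G (j + 1))
      (by simp [gate, blockRun_ne_nil _ _ hG1])
      (by simpa using Nat.pos_iff_ne_zero.1 ((length_pos_of_ne_nil hLs).trans_le hlen))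
      (hus.trans (witness_eq_gates c0 c1 G.factorial G N)) (by simpa [hfac.length_eq] using hlen)
  obtain ⟨j, -, rfl⟩ := List.mem_map.1 hS
  obtain ⟨Ls₁, L, Ls₂, rfl, h₁, hu, h₂⟩ := hfac.exists_of_append_cons
  refine zero_mem_posFold_of_factor_sub h₁ h₂ (sub_mem_toSet_of_gate_infix hG hu ⟨x, y, rfl⟩)
    (hus ▸ witness_mem_covDyck _ _ _) (by rw [hus, wordEff_witness])
    fun p hup hpw => ?_
  have hxp : replicate G.factorial (c0, true) <+: p :=
    (prefix_append _ _).trans (hP.trans (.trans ⟨gate c0 c1 G (j + 1) ++ y, by simp⟩ hup))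
  rw [hus, witness] at hpw
  rw [← wordEff_replicate]
  exact wordEff_le_of_prefix (flatten_mem_covDyck (by simp [phase_mem_covDyck])) hxp hpw

end DyckWitness

theorem exists_of_mem_RleFam {ℓ : ℕ} {M : Language (Sig n)} (h : M ∈ RleFam n ℓ) :
    ∃ k, ∃ Ls : List (LinSet n), Ls ≠ [] ∧ Ls.length ≤ ℓ ∧
      (0 : Fin n → ℤ) ∉ posFold (Ls.map LinSet.toSet) ∧ M = (Ls.map fun L => KApprox L k).prod := by
  simp only [RleFam, Set.mem_iUnion, Set.mem_Icc] at h
  obtain ⟨i, ⟨hi, hiℓ⟩, k, Ls, rfl, hpos, rfl⟩ := h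
  exact ⟨k, Ls, ne_nil_of_length_pos hi, hiℓ, hpos, rfl⟩

theorem exists_uniform_bound_of_subset_RleFam {ℓ : ℕ} {𝓜 : Set (Language (Sig n))}
    (hfin : 𝓜.Finite) (hsub : 𝓜 ⊆ RleFam n ℓ) :
    ∃ kM, ∀ M ∈ 𝓜, ∃ k ≤ kM, ∃ Ls : List (LinSet n), Ls ≠ [] ∧ Ls.length ≤ ℓ ∧
      (0 : Fin n → ℤ) ∉ posFold (Ls.map LinSet.toSet) ∧ M = (Ls.map fun L => KApprox L k).prod := by
  choose! kOf hkOf using fun M (hM : M ∈ 𝓜) => exists_of_mem_RleFam (hsub hM)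
  obtain ⟨kM, hkM⟩ := (hfin.image kOf).bddAbove
  exact ⟨kM, fun M hM => ⟨kOf M, hkM (Set.mem_image_of_mem _ hM), hkOf M hM⟩⟩

end

theorem stmt18_general (n : ℕ) (hn : 2 ≤ n) (B : Set (Language (Sig n)))
    (h : ∃ ℓ : ℕ, ∀ L ∈ B, ∃ F : Set (Language (Sig n)), F.Finite ∧ F ⊆ RleFam n ℓ ∧
      ∀ w ∈ L, ∃ K ∈ F, w ∈ K) :
    ¬ IsBasicSepSet (Dyck n) B := by
  rintro ⟨-, hcover⟩
  obtain ⟨ℓ, hℓ⟩ := h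
  have hne : (⟨0, by omega⟩ : Fin n) ≠ ⟨1, by omega⟩ := by simp
  obtain ⟨F, hFB, hFfin, hFcov⟩ := hcover _ (DyckWitness.slopeLang_isRegular _ _ (ℓ + 1))
    fun w hw => DyckWitness.slopeLang_disjoint_dyck hne hw
  choose! FK hFKfin hFKsub hFKcov using fun K hK => hℓ K (hFB hK)
  obtain ⟨kM, hkM⟩ := exists_uniform_bound_of_subset_RleFam (hFfin.biUnion hFKfin)
    (Set.iUnion₂_subset hFKsub)
  set G := (2 * kM + 1) ^ n + 1
  obtain ⟨K, hKF, hwK⟩ := hFcov _ (DyckWitness.witness_mem_slopeLang hne (m := G.factorial) (G := G)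
    (Nat.factorial_pos G) (by omega))
  obtain ⟨M, hMK, hwM⟩ := hFKcov K hKF _ hwK
  obtain ⟨k, hk, Ls, hLs, hlen, hpos, rfl⟩ := hkM M (Set.mem_biUnion hKF hMK)
  refine hpos (DyckWitness.zero_mem_posFold_of_witness_mem ?_ hLs hlen hwM)
  have := Nat.pow_le_pow_left (show 2 * k + 1 ≤ 2 * kM + 1 by omega) n
  omega

theorem stmt18 (n : ℕ) (hn : 2 ≤ n) (B : Set (Language (Sig n)))
    (hreg : ∀ L ∈ B, L.IsRegular)
    (h : ∃ ℓ : ℕ, ∀ L ∈ B, ∃ F : Set (Language (Sig n)), F.Finite ∧ F ⊆ RleFam n ℓ ∧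
      ∀ w ∈ L, ∃ K ∈ F, w ∈ K) :
    ¬ IsBasicSepSet (Dyck n) B :=
  stmt18_general n hn B h
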